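/- arXiv:2209.13567 — 3 statements merged into one kernel-verified Lean document; each statement's English description precedes it below -/
import Mathlib

section
/- Let P₁, P₂, P₃ be three points of ℙ¹×ℙ¹ such that no two of them have the same first ℙ¹-coordinate and no two of them have the same second ℙ¹-coordinate. Then the vector space of bihomogeneous polynomials of bidegree (1,1) in ℂ[X₀,X₁,Y₀,Y₁] vanishing at P₁, P₂, P₃ is one-dimensional, and every nonzero element of this space is irreducible in ℂ[X₀,X₁,Y₀,Y₁]. -/
open MvPolynomial

noncomputable section

/-- The polynomial ring ℂ[X₀,X₁,Y₀,Y₁], with variables indexed `0 ↦ X₀, 1 ↦ X₁, 2 ↦ Y₀, 3 ↦ Y₁`. -/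
abbrev C4 : Type := MvPolynomial (Fin 4) ℂ

/-- Evaluate `P ∈ ℂ[X₀,X₁,Y₀,Y₁]` at representatives `v = (x₀,x₁)`, `w = (y₀,y₁)`. -/
def evalP (P : C4) (v w : ℂ × ℂ) : ℂ := eval ![v.1, v.2, w.1, w.2] P

/-- `P` is bihomogeneous of bidegree `(m,n)`: every monomial `X₀^i X₁^j Y₀^k Y₁^l`
occurring in `P` satisfies `i + j = m` and `k + l = n`. -/
def IsBihom (m n : ℕ) (P : C4) : Prop :=
  ∀ d ∈ P.support, d 0 + d 1 = m ∧ d 2 + d 3 = n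

/-!
A bidegree `(1,1)` form is `(x, y) ↦ xᵀ M y` for a `2 × 2` matrix `M`. If `det M = 0`, then `M`
has rank at most one, so each point `(xᵢ, yᵢ)` on the form satisfies `xᵢᵀ M = 0` or `M yᵢ = 0`;
two of the three points fall on the same side, and since their coordinates are independent this
forces `M = 0`. The vanishing space is nonzero (four unknowns, three equations) and contains no
nonzero singular matrix, so it is a line: for `M₀, M` in it, the pencil `M - t M₀` has a singular
member over `ℂ`. Finally, a form with `det M ≠ 0` is obtained from `X₀Y₀ + X₁Y₁` by an invertible
linear change of `X₀, X₁`, and `X₀Y₀ + X₁Y₁` is irreducible, being of degree one in `X₀` with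
relatively prime coefficients `Y₀` and `X₁Y₁`.
-/

open Matrix

lemma Prod.fst_mul_snd_sub_ne_zero {K : Type*} [Field K] {u v : K × K}
    (huv : ¬∃ t : K, v = t • u) (hvu : ¬∃ t : K, u = t • v) : u.1 * v.2 - u.2 * v.1 ≠ 0 := by
  intro h
  by_cases hu : u = 0
  · exact hvu ⟨0, by simp [hu]⟩
  have hu' : u.1 ≠ 0 ∨ u.2 ≠ 0 := by
    by_contra! h0
    exact hu (Prod.ext h0.1 h0.2)
  rcases hu' with h1 | h2
  · refine huv ⟨v.1 / u.1, Prod.ext ?_ ?_⟩ <;>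
      simp only [Prod.smul_fst, Prod.smul_snd, smul_eq_mul] <;> field_simp
    linear_combination h
  · refine huv ⟨v.2 / u.2, Prod.ext ?_ ?_⟩ <;>
      simp only [Prod.smul_fst, Prod.smul_snd, smul_eq_mul] <;> field_simp
    linear_combination -h

namespace Matrix

variable {K : Type*} [Field K]

/-- Cauchy–Binet for `2 × 2` matrices. -/
lemma dotProduct_mulVec_mul_sub {R : Type*} [CommRing R] (M : Matrix (Fin 2) (Fin 2) R)
    (v w v' w' : Fin 2 → R) :
    (v ⬝ᵥ M *ᵥ w) * (v' ⬝ᵥ M *ᵥ w') - (v ⬝ᵥ M *ᵥ w') * (v' ⬝ᵥ M *ᵥ w)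
      = M.det * (v 0 * v' 1 - v 1 * v' 0) * (w 0 * w' 1 - w 1 * w' 0) := by
  simp only [det_fin_two, dotProduct, mulVec, Fin.sum_univ_two]
  ring

lemma eq_zero_of_mulVec_pair_eq_zero {M : Matrix (Fin 2) (Fin 2) K} {w w' : Fin 2 → K}
    (hw : M *ᵥ w = 0) (hw' : M *ᵥ w' = 0) (hww' : w 0 * w' 1 - w 1 * w' 0 ≠ 0) : M = 0 := by
  ext i j
  have e := congrFun hw i
  have e' := congrFun hw' i
  simp only [mulVec, dotProduct, Fin.sum_univ_two, Pi.zero_apply] at e e'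
  refine (mul_eq_zero.1 (?_ : M i j * (w 0 * w' 1 - w 1 * w' 0) = 0)).resolve_right hww'
  revert j
  rw [Fin.forall_fin_two]
  exact ⟨by linear_combination w' 1 * e - w 1 * e', by linear_combination w 0 * e' - w' 0 * e⟩

lemma eq_zero_of_vecMul_pair_eq_zero {M : Matrix (Fin 2) (Fin 2) K} {v v' : Fin 2 → K}
    (hv : v ᵥ* M = 0) (hv' : v' ᵥ* M = 0) (hvv' : v 0 * v' 1 - v 1 * v' 0 ≠ 0) : M = 0 := by
  rw [← mulVec_transpose] at hv hv'
  simpa using eq_zero_of_mulVec_pair_eq_zero hv hv' hvv'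

/-- A singular `2 × 2` matrix has rank at most one: by Cauchy–Binet, `(v ᵥ* M) l * (M *ᵥ w) k`
equals `(v ⬝ᵥ M *ᵥ w) * M k l` up to a multiple of `det M`. -/
lemma vecMul_eq_zero_or_mulVec_eq_zero {M : Matrix (Fin 2) (Fin 2) K} (hM : M.det = 0)
    {v w : Fin 2 → K} (h : v ⬝ᵥ M *ᵥ w = 0) : v ᵥ* M = 0 ∨ M *ᵥ w = 0 := by
  by_contra! hne
  obtain ⟨l, hl⟩ := Function.ne_iff.1 hne.1
  obtain ⟨k, hk⟩ := Function.ne_iff.1 hne.2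
  have := dotProduct_mulVec_mul_sub M v w (Pi.single k 1) (Pi.single l 1)
  simp only [h, hM, zero_mul, zero_sub, dotProduct_mulVec v, dotProduct_single,
    single_dotProduct, mul_one, one_mul, neg_eq_zero] at this
  exact mul_ne_zero hl hk this

lemma eq_zero_of_det_eq_zero_of_forall_dotProduct_mulVec_eq_zero {ι : Type*} [Fintype ι]
    (hι : 2 < Fintype.card ι) {x y : ι → Fin 2 → K}
    (hx : Pairwise fun i j => x i 0 * x j 1 - x i 1 * x j 0 ≠ 0)
    (hy : Pairwise fun i j => y i 0 * y j 1 - y i 1 * y j 0 ≠ 0)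
    {M : Matrix (Fin 2) (Fin 2) K} (hM : M.det = 0) (hxy : ∀ i, x i ⬝ᵥ M *ᵥ y i = 0) : M = 0 := by
  obtain ⟨i, j, hij, hsame⟩ :=
    Fintype.exists_ne_map_eq_of_card_lt (fun i => M *ᵥ y i = 0) (by simpa using hι)
  by_cases hi : M *ᵥ y i = 0
  · exact eq_zero_of_mulVec_pair_eq_zero hi (hsame ▸ hi) (hy hij)
  · have hj : M *ᵥ y j ≠ 0 := fun hj => hi (hsame ▸ hj)
    exact eq_zero_of_vecMul_pair_eq_zero
      ((vecMul_eq_zero_or_mulVec_eq_zero hM (hxy i)).resolve_right hi)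
      ((vecMul_eq_zero_or_mulVec_eq_zero hM (hxy j)).resolve_right hj) (hx hij)

/-- Take for `t` an eigenvalue of `B⁻¹ * A`. -/
lemma exists_det_sub_smul_eq_zero [IsAlgClosed K] {n : Type*} [Fintype n] [DecidableEq n]
    [Nonempty n] (A : Matrix n n K) {B : Matrix n n K} (hB : B.det ≠ 0) :
    ∃ t : K, (A - t • B).det = 0 := by
  obtain ⟨t, ht⟩ := IsAlgClosed.exists_root (B⁻¹ * A).charpoly
    (by rw [charpoly_degree_eq_dim]; exact_mod_cast Fintype.card_ne_zero)
  refine ⟨t, ?_⟩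
  have hfac : A - t • B = -(B * (scalar n t - B⁻¹ * A)) := by
    rw [mul_sub, mul_nonsing_inv_cancel_left _ _ (isUnit_iff_ne_zero.2 hB)]
    simp [smul_eq_mul_diagonal]
  rw [hfac, det_neg, det_mul, ← eval_charpoly, ht.eq_zero, mul_zero, mul_zero]

variable (K) in
def evalAtPairs {ι : Type*} (x y : ι → Fin 2 → K) : Matrix (Fin 2) (Fin 2) K →ₗ[K] ι → K where
  toFun M i := x i ⬝ᵥ M *ᵥ y i
  map_add' M N := by ext i; simp only [add_mulVec, dotProduct_add, Pi.add_apply]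
  map_smul' t M := by
    ext i; simp only [smul_mulVec, dotProduct_smul, Pi.smul_apply, RingHom.id_apply]

lemma exists_ne_zero_forall_dotProduct_mulVec_eq_zero {ι : Type*} [Fintype ι]
    (hι : Fintype.card ι < 4) (x y : ι → Fin 2 → K) :
    ∃ M : Matrix (Fin 2) (Fin 2) K, M ≠ 0 ∧ ∀ i, x i ⬝ᵥ M *ᵥ y i = 0 := by
  have hker : LinearMap.ker (evalAtPairs K x y) ≠ ⊥ :=
    LinearMap.ker_ne_bot_of_finrank_lt (by simpa [Module.finrank_matrix] using hι)
  obtain ⟨M, hM, hM0⟩ := (Submodule.ne_bot_iff _).1 hker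
  exact ⟨M, hM0, fun i => congrFun (LinearMap.mem_ker.1 hM) i⟩

lemma exists_eq_smul_of_forall_dotProduct_mulVec_eq_zero [IsAlgClosed K] {ι : Type*} [Fintype ι]
    (hι : 2 < Fintype.card ι) {x y : ι → Fin 2 → K}
    (hx : Pairwise fun i j => x i 0 * x j 1 - x i 1 * x j 0 ≠ 0)
    (hy : Pairwise fun i j => y i 0 * y j 1 - y i 1 * y j 0 ≠ 0)
    {M₀ M : Matrix (Fin 2) (Fin 2) K} (hM₀ : M₀ ≠ 0) (hxy₀ : ∀ i, x i ⬝ᵥ M₀ *ᵥ y i = 0)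
    (hxy : ∀ i, x i ⬝ᵥ M *ᵥ y i = 0) : ∃ t : K, M = t • M₀ := by
  have hdet : M₀.det ≠ 0 := fun h =>
    hM₀ (eq_zero_of_det_eq_zero_of_forall_dotProduct_mulVec_eq_zero hι hx hy h hxy₀)
  obtain ⟨t, ht⟩ := exists_det_sub_smul_eq_zero M hdet
  refine ⟨t, sub_eq_zero.1 (eq_zero_of_det_eq_zero_of_forall_dotProduct_mulVec_eq_zero hι hx hy ht
    fun i => ?_)⟩
  simp only [sub_mulVec, smul_mulVec, dotProduct_sub, dotProduct_smul, hxy, hxy₀, smul_zero,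
    sub_zero]

end Matrix

def formOfMatrix (M : Matrix (Fin 2) (Fin 2) ℂ) : C4 :=
  ∑ i, ∑ j, C (M i j) * X (![0, 1] i) * X (![2, 3] j)

def bimonomial (i j : Fin 2) : Fin 4 →₀ ℕ :=
  Finsupp.single (![0, 1] i) 1 + Finsupp.single (![2, 3] j) 1

lemma bimonomial_inj {i j k l : Fin 2} : bimonomial i j = bimonomial k l ↔ i = k ∧ j = l := by
  refine ⟨fun h => ?_, fun h => h.1 ▸ h.2 ▸ rfl⟩
  have h0 := DFunLike.congr_fun h 0
  have h2 := DFunLike.congr_fun h 2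
  fin_cases i <;> fin_cases j <;> fin_cases k <;> fin_cases l <;>
    simp [bimonomial] at h0 h2 ⊢

lemma bimonomial_bidegree (i j : Fin 2) :
    (bimonomial i j) 0 + (bimonomial i j) 1 = 1 ∧ (bimonomial i j) 2 + (bimonomial i j) 3 = 1 := by
  fin_cases i <;> fin_cases j <;> simp [bimonomial]

lemma exists_bimonomial_eq {m : Fin 4 →₀ ℕ} (hx : m 0 + m 1 = 1) (hy : m 2 + m 3 = 1) :
    ∃ i j, bimonomial i j = m := by
  refine ⟨if m 0 = 1 then 0 else 1, if m 2 = 1 then 0 else 1, ?_⟩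
  ext k
  fin_cases k <;> split_ifs <;>
    simp only [bimonomial, Finsupp.coe_add, Pi.add_apply, Finsupp.single_apply, cons_val_zero,
      cons_val_one, cons_val_fin_one, Fin.isValue, Fin.reduceEq, Fin.reduceFinMk, if_true,
      if_false] <;> omega

lemma coeff_formOfMatrix (M : Matrix (Fin 2) (Fin 2) ℂ) (m : Fin 4 →₀ ℕ) :
    coeff m (formOfMatrix M) = ∑ i, ∑ j, if bimonomial i j = m then M i j else 0 := by
  simp only [formOfMatrix, coeff_sum, X, C_mul_monomial, monomial_mul, mul_one, coeff_monomial]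
  rfl

lemma coeff_bimonomial_formOfMatrix (M : Matrix (Fin 2) (Fin 2) ℂ) (i j : Fin 2) :
    coeff (bimonomial i j) (formOfMatrix M) = M i j := by
  fin_cases i <;> fin_cases j <;> simp [coeff_formOfMatrix, bimonomial_inj]

lemma isBihom_formOfMatrix (M : Matrix (Fin 2) (Fin 2) ℂ) : IsBihom 1 1 (formOfMatrix M) := by
  intro m hm
  rw [mem_support_iff, coeff_formOfMatrix] at hm
  obtain ⟨i, -, hi⟩ := Finset.exists_ne_zero_of_sum_ne_zero hm
  obtain ⟨j, -, hj⟩ := Finset.exists_ne_zero_of_sum_ne_zero hi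
  obtain ⟨rfl, -⟩ := ite_ne_right_iff.1 hj
  exact bimonomial_bidegree i j

lemma exists_eq_formOfMatrix {Q : C4} (hQ : IsBihom 1 1 Q) : ∃ M, Q = formOfMatrix M := by
  refine ⟨Matrix.of fun i j => coeff (bimonomial i j) Q, ?_⟩
  ext m
  by_cases hm : ∃ i j, bimonomial i j = m
  · obtain ⟨i, j, rfl⟩ := hm
    rw [coeff_bimonomial_formOfMatrix, of_apply]
  · have hQm : m ∉ Q.support := fun h => hm (exists_bimonomial_eq (hQ m h).1 (hQ m h).2)
    simp only [not_exists] at hm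
    simp [notMem_support_iff.1 hQm, coeff_formOfMatrix, hm]

@[simp]
lemma formOfMatrix_zero : formOfMatrix 0 = 0 := by
  simp [formOfMatrix]

lemma formOfMatrix_smul (t : ℂ) (M : Matrix (Fin 2) (Fin 2) ℂ) :
    formOfMatrix (t • M) = t • formOfMatrix M := by
  simp only [formOfMatrix, Finset.smul_sum, Matrix.smul_apply, smul_eq_mul, C_mul, smul_eq_C_mul,
    mul_assoc]

lemma formOfMatrix_injective : Function.Injective formOfMatrix := fun M N h => by
  ext i j
  rw [← coeff_bimonomial_formOfMatrix M, h, coeff_bimonomial_formOfMatrix]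

lemma evalP_formOfMatrix (M : Matrix (Fin 2) (Fin 2) ℂ) (v w : ℂ × ℂ) :
    evalP (formOfMatrix M) v w = ![v.1, v.2] ⬝ᵥ M *ᵥ ![w.1, w.2] := by
  simp only [evalP, formOfMatrix, Fin.sum_univ_two, cons_val_zero, cons_val_one, cons_val_fin_one,
    map_add, map_mul, eval_C, eval_X, cons_val, dotProduct, mulVec, Fin.isValue]
  ring

/-- The linear change of coordinates `(X₀, X₁) ↦ (X₀, X₁) A`, fixing `Y₀, Y₁`. -/
def substX (A : Matrix (Fin 2) (Fin 2) ℂ) : C4 →ₐ[ℂ] C4 :=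
  aeval ![C (A 0 0) * X 0 + C (A 1 0) * X 1, C (A 0 1) * X 0 + C (A 1 1) * X 1, X 2, X 3]

lemma substX_formOfMatrix (A B : Matrix (Fin 2) (Fin 2) ℂ) :
    substX A (formOfMatrix B) = formOfMatrix (A * B) := by
  simp only [substX, aeval_eq_bind₁, formOfMatrix, Fin.sum_univ_two, cons_val_zero, cons_val_one,
    cons_val_fin_one, map_add, map_mul, algHom_C, algebraMap_eq, bind₁_X_right, cons_val, mul_apply,
    Fin.isValue]
  ring

lemma substX_mul (A B : Matrix (Fin 2) (Fin 2) ℂ) :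
    substX (A * B) = (substX A).comp (substX B) := by
  refine algHom_ext fun k => ?_
  fin_cases k <;>
    simp only [substX, mul_apply, Fin.sum_univ_two, aeval_eq_bind₁, bind₁_X_right,
      cons_val_zero, cons_val_one, cons_val, AlgHom.coe_comp, Function.comp_apply, map_add, map_mul,
      algHom_C, algebraMap_eq, Fin.isValue, Fin.zero_eta, Fin.mk_one, Fin.reduceFinMk] <;>
    ring

lemma substX_one : substX 1 = AlgHom.id ℂ C4 := by
  refine algHom_ext fun k => ?_
  fin_cases k <;> simp [substX]

def substXEquiv (A : (Matrix (Fin 2) (Fin 2) ℂ)ˣ) : C4 ≃ₐ[ℂ] C4 :=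
  AlgEquiv.ofAlgHom (substX A) (substX ↑A⁻¹)
    (by rw [← substX_mul, Units.mul_inv, substX_one])
    (by rw [← substX_mul, Units.inv_mul, substX_one])

lemma irreducible_formOfMatrix_one : Irreducible (formOfMatrix 1) := by
  have hform : formOfMatrix 1 = X 0 * X (Fin.succ 1) + X (Fin.succ 0) * X (Fin.succ 2) := by
    simp [formOfMatrix, Fin.sum_univ_two]
  have hrel : IsRelPrime (X 1 : MvPolynomial (Fin 3) ℂ) (X 0 * X 2) :=
    X_prime.irreducible.isRelPrime_iff_not_dvd.2 (by simp [X_dvd_mul_iff])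
  rw [← MulEquiv.irreducible_iff (finSuccEquiv ℂ 3), hform]
  convert Polynomial.irreducible_C_mul_X_add_C (X_ne_zero 1) hrel using 1
  rw [map_add, map_mul, map_mul, finSuccEquiv_X_zero, finSuccEquiv_X_succ, finSuccEquiv_X_succ,
    finSuccEquiv_X_succ, Polynomial.C_mul]
  ring

lemma irreducible_formOfMatrix {A : Matrix (Fin 2) (Fin 2) ℂ} (hA : A.det ≠ 0) :
    Irreducible (formOfMatrix A) := by
  have hunit : IsUnit A := (isUnit_iff_isUnit_det A).2 hA.isUnit
  have h : formOfMatrix A = substXEquiv hunit.unit (formOfMatrix 1) := by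
    rw [substXEquiv, AlgEquiv.ofAlgHom_apply, substX_formOfMatrix, IsUnit.unit_spec, mul_one]
  rw [h, MulEquiv.irreducible_iff]
  exact irreducible_formOfMatrix_one

theorem bidegree_one_one_through_three_generic_points_general
    (x y : Fin 3 → ℂ × ℂ)
    (hx : ∀ i j, i ≠ j → ¬ ∃ t : ℂ, x j = t • x i)
    (hy : ∀ i j, i ≠ j → ¬ ∃ t : ℂ, y j = t • y i) :
    (∃ P₀ : C4, P₀ ≠ 0 ∧ IsBihom 1 1 P₀ ∧ (∀ i, evalP P₀ (x i) (y i) = 0) ∧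
      ∀ Q : C4, IsBihom 1 1 Q → (∀ i, evalP Q (x i) (y i) = 0) → ∃ t : ℂ, Q = t • P₀) ∧
    (∀ Q : C4, Q ≠ 0 → IsBihom 1 1 Q → (∀ i, evalP Q (x i) (y i) = 0) → Irreducible Q) := by
  set u : Fin 3 → Fin 2 → ℂ := fun i => ![(x i).1, (x i).2]
  set w : Fin 3 → Fin 2 → ℂ := fun i => ![(y i).1, (y i).2]
  have hu : Pairwise fun i j => u i 0 * u j 1 - u i 1 * u j 0 ≠ 0 := fun i j hij => by
    simpa [u] using Prod.fst_mul_snd_sub_ne_zero (hx i j hij) (hx j i hij.symm)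
  have hw : Pairwise fun i j => w i 0 * w j 1 - w i 1 * w j 0 ≠ 0 := fun i j hij => by
    simpa [w] using Prod.fst_mul_snd_sub_ne_zero (hy i j hij) (hy j i hij.symm)
  have hcard : 2 < Fintype.card (Fin 3) := by simp
  have hvan : ∀ M, (∀ i, evalP (formOfMatrix M) (x i) (y i) = 0) ↔ ∀ i, u i ⬝ᵥ M *ᵥ w i = 0 :=
    fun M => by simp only [evalP_formOfMatrix, u, w]
  obtain ⟨M₀, hM₀, hvan₀⟩ := exists_ne_zero_forall_dotProduct_mulVec_eq_zero (by simp) u w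
  refine ⟨⟨formOfMatrix M₀, ?_, isBihom_formOfMatrix M₀, (hvan M₀).2 hvan₀, ?_⟩, ?_⟩
  · simpa using formOfMatrix_injective.ne hM₀
  · intro Q hQ hQvan
    obtain ⟨M, rfl⟩ := exists_eq_formOfMatrix hQ
    obtain ⟨t, rfl⟩ := exists_eq_smul_of_forall_dotProduct_mulVec_eq_zero hcard hu hw hM₀ hvan₀
      ((hvan M).1 hQvan)
    exact ⟨t, formOfMatrix_smul t M₀⟩
  · intro Q hQ0 hQ hQvan
    obtain ⟨M, rfl⟩ := exists_eq_formOfMatrix hQ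
    refine irreducible_formOfMatrix fun hdet => hQ0 ?_
    rw [eq_zero_of_det_eq_zero_of_forall_dotProduct_mulVec_eq_zero hcard hu hw hdet
      ((hvan M).1 hQvan), formOfMatrix_zero]

/-- Three points of ℙ¹×ℙ¹, no two sharing a first coordinate and no two sharing a
second coordinate (given by nonzero, pairwise non-proportional representatives).
Then the space of bidegree (1,1) polynomials vanishing at the three points is
one-dimensional, and every nonzero element of it is irreducible. -/
theorem bidegree_one_one_through_three_generic_points
    (x y : Fin 3 → ℂ × ℂ) (hx0 : ∀ i, x i ≠ 0) (hy0 : ∀ i, y i ≠ 0)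
    (hx : ∀ i j, i ≠ j → ¬ ∃ t : ℂ, x j = t • x i)
    (hy : ∀ i j, i ≠ j → ¬ ∃ t : ℂ, y j = t • y i) :
    (∃ P₀ : C4, P₀ ≠ 0 ∧ IsBihom 1 1 P₀ ∧ (∀ i, evalP P₀ (x i) (y i) = 0) ∧
      ∀ Q : C4, IsBihom 1 1 Q → (∀ i, evalP Q (x i) (y i) = 0) → ∃ t : ℂ, Q = t • P₀) ∧
    (∀ Q : C4, Q ≠ 0 → IsBihom 1 1 Q → (∀ i, evalP Q (x i) (y i) = 0) → Irreducible Q) :=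
  bidegree_one_one_through_three_generic_points_general x y hx hy
end
end

section
/- Let P and Q be bihomogeneous polynomials of bidegree (1,1) in ℂ[X₀,X₁,Y₀,Y₁] with no common non-unit factor. Then P and Q have at most 2 common zeros in ℙ¹×ℙ¹, i.e., the set of points ([x₀:x₁],[y₀:y₁]) with P(x₀,x₁,y₀,y₁) = Q(x₀,x₁,y₀,y₁) = 0 has at most 2 elements. (Bezout's theorem on ℙ¹×ℙ¹: the intersection number of two (1,1)-curves is 2.) -/
open MvPolynomial

noncomputable section

/-- ℙ¹ as the projectivization of ℂ². -/
abbrev P1 : Type := Projectivization ℂ (ℂ × ℂ)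

/-- A polynomial in ℂ[X₀,X₁,Y₀,Y₁] vanishes at a point `(p,q)` of ℙ¹×ℙ¹ if it
vanishes at every choice of representatives. -/
def VanishesAt (P : C4) (p q : P1) : Prop :=
  ∀ (v w : ℂ × ℂ) (hv : v ≠ 0) (hw : w ≠ 0),
    Projectivization.mk ℂ v hv = p → Projectivization.mk ℂ w hw = q → evalP P v w = 0

/-!
A `(1,1)`-form is a bilinear form `F(v, w)` on `ℂ² × ℂ²`. If two common zeros of `P` and `Q`
share a coordinate, say `[v]`, then both forms vanish on `{[v]} × ℙ¹`, so the linear form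
defining `[v]` divides both. Hence three distinct common zeros `([vᵢ], [wᵢ])` have pairwise
distinct first and pairwise distinct second coordinates. For such points, a `(1,1)`-form
vanishing at all three is determined by its value at `(v₁, w₂)`; applied to
`Q(v₁,w₂) P - P(v₁,w₂) Q` this makes `P` and `Q` proportional, and then one divides the other,
which is impossible for coprime non-units.
-/

section Cross

variable {K : Type*} [Field K]

def cross (v w : K × K) : K := v.1 * w.2 - v.2 * w.1

theorem exists_eq_smul_of_cross_eq_zero {v w : K × K} (hv : v ≠ 0) (h : cross v w = 0) :
    ∃ α : K, w = α • v := by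
  unfold cross at h
  by_cases hv₁ : v.1 = 0
  · have hv₂ : v.2 ≠ 0 := fun hv₂ => hv (Prod.ext hv₁ hv₂)
    have hw₁ : w.1 = 0 := by
      rw [hv₁, zero_mul, zero_sub, neg_eq_zero] at h
      exact (mul_eq_zero.1 h).resolve_left hv₂
    refine ⟨w.2 / v.2, Prod.ext ?_ ?_⟩ <;> simp [hv₁, hw₁, hv₂]
  · refine ⟨w.1 / v.1, Prod.ext ?_ ?_⟩
    · simp [hv₁]
    · rw [Prod.smul_snd, smul_eq_mul]
      field_simp
      linear_combination h

theorem eq_zero_of_cross_ne_zero {A B : K} {u u' : K × K} (h : A * u.1 + B * u.2 = 0)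
    (h' : A * u'.1 + B * u'.2 = 0) (hu : cross u u' ≠ 0) : A = 0 ∧ B = 0 := by
  unfold cross at hu
  constructor
  · have : A * (u.1 * u'.2 - u.2 * u'.1) = 0 := by linear_combination u'.2 * h - u.2 * h'
    exact (mul_eq_zero.1 this).resolve_right hu
  · have : B * (u.1 * u'.2 - u.2 * u'.1) = 0 := by linear_combination u.1 * h' - u'.1 * h
    exact (mul_eq_zero.1 this).resolve_right hu

theorem cross_rep_ne_zero {p q : Projectivization K (K × K)} (h : p ≠ q) :
    cross p.rep q.rep ≠ 0 := by
  intro hc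
  obtain ⟨α, hα⟩ := exists_eq_smul_of_cross_eq_zero p.rep_nonzero hc
  refine h (Eq.symm ?_)
  rw [← p.mk_rep, ← q.mk_rep, Projectivization.mk_eq_mk_iff']
  exact ⟨α, hα.symm⟩

end Cross

section FieldCoefficients

variable {σ K : Type*} [Field K]

def linForm (i j : σ) (v : K × K) : MvPolynomial σ K := C v.2 * X i - C v.1 * X j

theorem not_isUnit_of_constantCoeff_eq_zero {R : Type*} [CommSemiring R] [Nontrivial R]
    {p : MvPolynomial σ R} (h : constantCoeff p = 0) : ¬IsUnit p := fun hp =>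
  not_isUnit_zero (h ▸ hp.map constantCoeff)

theorem not_isUnit_linForm (i j : σ) (v : K × K) : ¬IsUnit (linForm i j v) :=
  not_isUnit_of_constantCoeff_eq_zero (by simp [linForm])

theorem linForm_dvd (i j : σ) {v : K × K} {a c : K} (hv : v ≠ 0) (h : a * v.1 + c * v.2 = 0) :
    linForm i j v ∣ C a * X i + C c * X j := by
  have hu : (v.2, -v.1) ≠ 0 := fun hu =>
    hv (Prod.ext (neg_eq_zero.1 (congrArg Prod.snd hu)) (congrArg Prod.fst hu))
  obtain ⟨α, hα⟩ := exists_eq_smul_of_cross_eq_zero (w := (a, c)) hu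
    (by unfold cross; linear_combination h)
  simp only [Prod.ext_iff, Prod.smul_mk, smul_eq_mul] at hα
  refine ⟨C α, ?_⟩
  rw [linForm, hα.1, hα.2, C_mul, C_mul, C_neg]
  ring

theorem IsRelPrime.eq_zero_of_C_mul_eq_C_mul {P Q : MvPolynomial σ K} (hPQ : IsRelPrime P Q)
    (hP : ¬IsUnit P) {p q : K} (h : C q * P = C p * Q) : p = 0 := by
  by_contra hp
  refine hP (hPQ dvd_rfl ⟨C (q / p), ?_⟩)
  calc Q = C p⁻¹ * (C p * Q) := by rw [← mul_assoc, ← C_mul, inv_mul_cancel₀ hp, C_1, one_mul]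
    _ = P * C (q / p) := by rw [← h, div_eq_inv_mul, C_mul]; ring

end FieldCoefficients

def expMul {σ : Type*} (i j : σ) : σ →₀ ℕ := Finsupp.single i 1 + Finsupp.single j 1

theorem C_mul_X_mul_X {σ R : Type*} [CommSemiring R] (a : R) (i j : σ) :
    C a * X i * X j = monomial (expMul i j) a := by
  rw [C_mul_X_eq_monomial, X, monomial_mul, mul_one, expMul]

theorem eq_expMul_of_bidegree_one_one {d : Fin 4 →₀ ℕ} (h₀₁ : d 0 + d 1 = 1)
    (h₂₃ : d 2 + d 3 = 1) :
    d = expMul 0 2 ∨ d = expMul 0 3 ∨ d = expMul 1 2 ∨ d = expMul 1 3 := by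
  have h₀ : d 0 = 1 ∧ d 1 = 0 ∨ d 0 = 0 ∧ d 1 = 1 := by omega
  have h₂ : d 2 = 1 ∧ d 3 = 0 ∨ d 2 = 0 ∧ d 3 = 1 := by omega
  rcases h₀ with ⟨h0, h1⟩ | ⟨h0, h1⟩ <;> rcases h₂ with ⟨h2, h3⟩ | ⟨h2, h3⟩ <;>
    simp [expMul, Finsupp.ext_iff, Fin.forall_fin_succ, h0, h1, h2, h3]

def bilin (a b c d : ℂ) : C4 :=
  C a * X 0 * X 2 + C b * X 0 * X 3 + C c * X 1 * X 2 + C d * X 1 * X 3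

theorem evalP_bilin (a b c d : ℂ) (v w : ℂ × ℂ) :
    evalP (bilin a b c d) v w =
      a * v.1 * w.1 + b * v.1 * w.2 + c * v.2 * w.1 + d * v.2 * w.2 := by
  simp [evalP, bilin]

theorem evalP_C_mul_sub_C_mul (a b : ℂ) (P Q : C4) (v w : ℂ × ℂ) :
    evalP (C a * P - C b * Q) v w = a * evalP P v w - b * evalP Q v w := by
  simp [evalP]

theorem VanishesAt.evalP_rep {P : C4} {p q : P1} (h : VanishesAt P p q) :
    evalP P p.rep q.rep = 0 :=
  h _ _ p.rep_nonzero q.rep_nonzero p.mk_rep q.mk_rep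

namespace IsBihom

variable {m n : ℕ} {P Q F : C4}

theorem sub (hP : IsBihom m n P) (hQ : IsBihom m n Q) : IsBihom m n (P - Q) := fun d hd =>
  (Finset.mem_union.1 (support_sub _ P Q hd)).elim (hP d) (hQ d)

theorem C_mul (hP : IsBihom m n P) (a : ℂ) : IsBihom m n (C a * P) :=
  fun d hd => hP d (support_smul (by rwa [← C_mul']))

theorem not_isUnit (hP : IsBihom m n P) (hm : m ≠ 0) : ¬IsUnit P := by
  refine not_isUnit_of_constantCoeff_eq_zero (notMem_support_iff.1 fun h => hm ?_)
  simpa using (hP 0 h).1.symm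

theorem exists_eq_bilin (hP : IsBihom 1 1 P) : ∃ a b c d, P = bilin a b c d := by
  refine ⟨coeff (expMul 0 2) P, coeff (expMul 0 3) P, coeff (expMul 1 2) P,
    coeff (expMul 1 3) P, ?_⟩
  ext e
  simp only [bilin, C_mul_X_mul_X, coeff_add, coeff_monomial]
  by_cases he : e ∈ P.support
  · rcases eq_expMul_of_bidegree_one_one (hP e he).1 (hP e he).2 with rfl | rfl | rfl | rfl <;>
      simp [expMul, Finsupp.ext_iff, Fin.forall_fin_succ]
  · rw [notMem_support_iff.1 he]
    split_ifs <;> subst_vars <;> simp_all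

theorem linForm_fst_dvd (hF : IsBihom 1 1 F) {v w w' : ℂ × ℂ} (hv : v ≠ 0)
    (hw : cross w w' ≠ 0) (h : evalP F v w = 0) (h' : evalP F v w' = 0) :
    linForm 0 1 v ∣ F := by
  obtain ⟨a, b, c, d, rfl⟩ := hF.exists_eq_bilin
  rw [evalP_bilin] at h h'
  obtain ⟨hac, hbd⟩ := eq_zero_of_cross_ne_zero (A := a * v.1 + c * v.2)
    (B := b * v.1 + d * v.2) (by linear_combination h) (by linear_combination h') hw
  have hF : bilin a b c d = (C a * X 0 + C c * X 1) * X 2 + (C b * X 0 + C d * X 1) * X 3 := by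
    rw [bilin]; ring
  rw [hF]
  exact dvd_add (dvd_mul_of_dvd_left (linForm_dvd 0 1 hv hac) _)
    (dvd_mul_of_dvd_left (linForm_dvd 0 1 hv hbd) _)

theorem linForm_snd_dvd (hF : IsBihom 1 1 F) {v v' w : ℂ × ℂ} (hw : w ≠ 0)
    (hv : cross v v' ≠ 0) (h : evalP F v w = 0) (h' : evalP F v' w = 0) :
    linForm 2 3 w ∣ F := by
  obtain ⟨a, b, c, d, rfl⟩ := hF.exists_eq_bilin
  rw [evalP_bilin] at h h'
  obtain ⟨hab, hcd⟩ := eq_zero_of_cross_ne_zero (A := a * w.1 + b * w.2)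
    (B := c * w.1 + d * w.2) (by linear_combination h) (by linear_combination h') hv
  have hF : bilin a b c d = X 0 * (C a * X 2 + C b * X 3) + X 1 * (C c * X 2 + C d * X 3) := by
    rw [bilin]; ring
  rw [hF]
  exact dvd_add (dvd_mul_of_dvd_right (linForm_dvd 2 3 hw hab) _)
    (dvd_mul_of_dvd_right (linForm_dvd 2 3 hw hcd) _)

theorem eq_zero_of_evalP_basis (hF : IsBihom 1 1 F) {v₁ v₂ w₁ w₂ : ℂ × ℂ}
    (hv : cross v₁ v₂ ≠ 0) (hw : cross w₁ w₂ ≠ 0) (h₁₁ : evalP F v₁ w₁ = 0)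
    (h₁₂ : evalP F v₁ w₂ = 0) (h₂₁ : evalP F v₂ w₁ = 0) (h₂₂ : evalP F v₂ w₂ = 0) : F = 0 := by
  obtain ⟨a, b, c, d, rfl⟩ := hF.exists_eq_bilin
  rw [evalP_bilin] at h₁₁ h₁₂ h₂₁ h₂₂
  obtain ⟨hac₁, hbd₁⟩ := eq_zero_of_cross_ne_zero (A := a * v₁.1 + c * v₁.2)
    (B := b * v₁.1 + d * v₁.2) (by linear_combination h₁₁) (by linear_combination h₁₂) hw
  obtain ⟨hac₂, hbd₂⟩ := eq_zero_of_cross_ne_zero (A := a * v₂.1 + c * v₂.2)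
    (B := b * v₂.1 + d * v₂.2) (by linear_combination h₂₁) (by linear_combination h₂₂) hw
  obtain ⟨rfl, rfl⟩ := eq_zero_of_cross_ne_zero hac₁ hac₂ hv
  obtain ⟨rfl, rfl⟩ := eq_zero_of_cross_ne_zero hbd₁ hbd₂ hv
  simp [bilin]

theorem eq_zero_of_evalP_three_points (hF : IsBihom 1 1 F) {v₁ v₂ v₃ w₁ w₂ w₃ : ℂ × ℂ}
    (hv₁₂ : cross v₁ v₂ ≠ 0) (hv₁₃ : cross v₁ v₃ ≠ 0) (hw₁₂ : cross w₁ w₂ ≠ 0)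
    (hw₃₂ : cross w₃ w₂ ≠ 0) (h₁₁ : evalP F v₁ w₁ = 0) (h₂₂ : evalP F v₂ w₂ = 0)
    (h₃₃ : evalP F v₃ w₃ = 0) (h₁₂ : evalP F v₁ w₂ = 0) : F = 0 := by
  refine hF.eq_zero_of_evalP_basis hv₁₂ hw₁₂ h₁₁ h₁₂ ?_ h₂₂
  obtain ⟨a, b, c, d, rfl⟩ := hF.exists_eq_bilin
  -- Cramer: `cross v₁ v₂ • v₃ = cross v₃ v₂ • v₁ + cross v₁ v₃ • v₂`, and likewise for `w₃`;
  -- expanding `F(v₃, w₃)` bilinearly, only the `F(v₂, w₁)` term survives.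
  have key : cross v₁ v₃ * cross w₃ w₂ * evalP (bilin a b c d) v₂ w₁ = 0 := by
    rw [evalP_bilin] at *
    linear_combination (norm := (simp only [cross]; ring))
      (cross v₁ v₂ * cross w₁ w₂) * h₃₃ - (cross v₃ v₂ * cross w₃ w₂) * h₁₁
        - (cross v₃ v₂ * cross w₁ w₃) * h₁₂ - (cross v₁ v₃ * cross w₁ w₃) * h₂₂
  exact (mul_eq_zero.1 key).resolve_left (mul_ne_zero hv₁₃ hw₃₂)

end IsBihom

def commonZeros (P Q : C4) : Set (P1 × P1) := {z | VanishesAt P z.1 z.2 ∧ VanishesAt Q z.1 z.2}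

section CommonZeros

variable {P Q : C4}

theorem fst_ne_of_mem_commonZeros (hP : IsBihom 1 1 P) (hQ : IsBihom 1 1 Q)
    (hPQ : IsRelPrime P Q) {z z' : P1 × P1} (hz : z ∈ commonZeros P Q)
    (hz' : z' ∈ commonZeros P Q) (hne : z ≠ z') : z.1 ≠ z'.1 := by
  intro h₁
  have hw := cross_rep_ne_zero fun h₂ => hne (Prod.ext h₁ h₂)
  obtain ⟨hz'P, hz'Q⟩ := hz'
  rw [← h₁] at hz'P hz'Q
  exact not_isUnit_linForm _ _ _ (hPQ
    (hP.linForm_fst_dvd z.1.rep_nonzero hw hz.1.evalP_rep hz'P.evalP_rep)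
    (hQ.linForm_fst_dvd z.1.rep_nonzero hw hz.2.evalP_rep hz'Q.evalP_rep))

theorem snd_ne_of_mem_commonZeros (hP : IsBihom 1 1 P) (hQ : IsBihom 1 1 Q)
    (hPQ : IsRelPrime P Q) {z z' : P1 × P1} (hz : z ∈ commonZeros P Q)
    (hz' : z' ∈ commonZeros P Q) (hne : z ≠ z') : z.2 ≠ z'.2 := by
  intro h₂
  have hv := cross_rep_ne_zero fun h₁ => hne (Prod.ext h₁ h₂)
  obtain ⟨hz'P, hz'Q⟩ := hz'
  rw [← h₂] at hz'P hz'Q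
  exact not_isUnit_linForm _ _ _ (hPQ
    (hP.linForm_snd_dvd z.2.rep_nonzero hv hz.1.evalP_rep hz'P.evalP_rep)
    (hQ.linForm_snd_dvd z.2.rep_nonzero hv hz.2.evalP_rep hz'Q.evalP_rep))

theorem eq_of_mem_commonZeros (hP : IsBihom 1 1 P) (hQ : IsBihom 1 1 Q)
    (hPQ : IsRelPrime P Q) {z₁ z₂ z₃ : P1 × P1} (h₁ : z₁ ∈ commonZeros P Q)
    (h₂ : z₂ ∈ commonZeros P Q) (h₃ : z₃ ∈ commonZeros P Q) (h₁₂ : z₁ ≠ z₂) (h₁₃ : z₁ ≠ z₃) :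
    z₂ = z₃ := by
  by_contra h₂₃
  have hv₁₂ := cross_rep_ne_zero (fst_ne_of_mem_commonZeros hP hQ hPQ h₁ h₂ h₁₂)
  have hv₁₃ := cross_rep_ne_zero (fst_ne_of_mem_commonZeros hP hQ hPQ h₁ h₃ h₁₃)
  have hw₁₂ := cross_rep_ne_zero (snd_ne_of_mem_commonZeros hP hQ hPQ h₁ h₂ h₁₂)
  have hw₃₂ := cross_rep_ne_zero (snd_ne_of_mem_commonZeros hP hQ hPQ h₃ h₂ (Ne.symm h₂₃))
  set p := evalP P z₁.1.rep z₂.2.rep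
  set q := evalP Q z₁.1.rep z₂.2.rep
  have hF : C q * P - C p * Q = 0 := by
    refine ((hP.C_mul q).sub (hQ.C_mul p)).eq_zero_of_evalP_three_points hv₁₂ hv₁₃ hw₁₂ hw₃₂
      ?_ ?_ ?_ ?_ <;> rw [evalP_C_mul_sub_C_mul]
    · rw [h₁.1.evalP_rep, h₁.2.evalP_rep]; ring
    · rw [h₂.1.evalP_rep, h₂.2.evalP_rep]; ring
    · rw [h₃.1.evalP_rep, h₃.2.evalP_rep]; ring
    · ring
  have hp : p = 0 :=
    hPQ.eq_zero_of_C_mul_eq_C_mul (hP.not_isUnit one_ne_zero) (sub_eq_zero.1 hF)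
  have hP0 : P = 0 := hP.eq_zero_of_evalP_three_points hv₁₂ hv₁₃ hw₁₂ hw₃₂
    h₁.1.evalP_rep h₂.1.evalP_rep h₃.1.evalP_rep hp
  exact hQ.not_isUnit one_ne_zero (isRelPrime_zero_left.1 (hP0 ▸ hPQ))

end CommonZeros

theorem Set.exists_subset_pair_of_forall_ne {α : Type*} [Nonempty α] {s : Set α}
    (h : ∀ x ∈ s, ∀ y ∈ s, ∀ z ∈ s, x ≠ y → x ≠ z → y = z) : ∃ a b, s ⊆ {a, b} := by
  rcases s.subsingleton_or_nontrivial with hs | ⟨x, hx, y, hy, hxy⟩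
  · rcases s.eq_empty_or_nonempty with rfl | ⟨x, hx⟩
    · exact ⟨Classical.arbitrary α, Classical.arbitrary α, Set.empty_subset _⟩
    · exact ⟨x, x, fun p hp => Or.inl (hs hp hx)⟩
  · exact ⟨x, y, fun p hp =>
      or_iff_not_imp_left.2 fun hpx => (h x hx y hy p hp hxy (Ne.symm hpx)).symm⟩

/-- Bezout on ℙ¹×ℙ¹: two bidegree (1,1) polynomials with no common non-unit
factor have at most 2 common zeros in ℙ¹×ℙ¹. -/
theorem bezout_one_one_curves
    (P Q : C4) (hP : IsBihom 1 1 P) (hQ : IsBihom 1 1 Q)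
    (hcop : ∀ D : C4, D ∣ P → D ∣ Q → IsUnit D) :
    ∃ z₁ z₂ : P1 × P1, ∀ p : P1 × P1,
      VanishesAt P p.1 p.2 → VanishesAt Q p.1 p.2 → p = z₁ ∨ p = z₂ := by
  obtain ⟨z₁, z₂, h⟩ := Set.exists_subset_pair_of_forall_ne fun _ h₁ _ h₂ _ h₃ =>
    eq_of_mem_commonZeros hP hQ (fun D => hcop D) h₁ h₂ h₃
  exact ⟨z₁, z₂, fun p hpP hpQ => h ⟨hpP, hpQ⟩⟩
end
end

section
/- Let S and T be any types and let A be a set of 5 points in S × T. Suppose that for each s ∈ S at most 2 points of A have first coordinate s, for each t ∈ T at most 2 points of A have second coordinate t, and every point of A shares its first coordinate or its second coordinate with at least one other point of A. Then there exist s ∈ S and t ∈ T such that at least 4 points of A have first coordinate equal to s or second coordinate equal to t. -/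
/-! Points of `A` sharing their first coordinate with another point of `A` come in vertical
pairs, so there are evenly many of them, and likewise for horizontal pairs. Every point lies
in some pair, so the odd numbers of points outside vertical pairs and outside horizontal pairs
add up to at most `5`: one of them is `1`, say only `x` is in no vertical pair, and `x` has a
horizontal partner `y`. The other three points lie in vertical pairs, and since a vertical line
carries at most two points they cannot all pair with `y`; so two of them form a vertical pair,
which together with `{x, y}` gives the four points. -/

namespace Finset

variable {α β γ : Type*} [DecidableEq α] [DecidableEq β] [DecidableEq γ]

def pairedBy (A : Finset α) (f : α → β) : Finset α :=
  {p ∈ A | ∃ q ∈ A, q ≠ p ∧ f q = f p}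

variable {A : Finset α} {f : α → β} {g : α → γ}

lemma pairedBy_subset : A.pairedBy f ⊆ A := filter_subset _ _

lemma filter_pairedBy_eq_of_mem {p : α} (hp : p ∈ A.pairedBy f) :
    {x ∈ A.pairedBy f | f x = f p} = {x ∈ A | f x = f p} := by
  obtain ⟨hpA, q, hqA, hqp, hfq⟩ := mem_filter.1 hp
  ext x
  simp only [pairedBy, mem_filter, and_congr_left_iff, and_iff_left_iff_imp]
  intro hfx hxA
  by_cases hxp : x = p
  · subst hxp; exact ⟨q, hqA, hqp, hfq⟩
  · exact ⟨p, hpA, Ne.symm hxp, hfx.symm⟩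

lemma even_card_pairedBy (hf : ∀ b, #{p ∈ A | f p = b} ≤ 2) : Even #(A.pairedBy f) := by
  have hfiber : ∀ b ∈ (A.pairedBy f).image f, #{x ∈ A.pairedBy f | f x = b} = 2 := by
    simp only [mem_image]
    rintro _ ⟨p, hp, rfl⟩
    rw [filter_pairedBy_eq_of_mem hp]
    obtain ⟨hpA, q, hqA, hqp, hfq⟩ := mem_filter.1 hp
    refine le_antisymm (hf _) (one_lt_card.2 ⟨p, ?_, q, ?_, hqp.symm⟩) <;> simp_all
  rw [card_eq_sum_card_image f, sum_const_nat hfiber]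
  exact even_two.mul_left _

lemma card_add_card_le_card_filter_or {V H : Finset α} {s : β} {t : γ} (hV : V ⊆ A) (hH : H ⊆ A)
    (hVH : Disjoint V H) (hs : ∀ p ∈ V, f p = s) (ht : ∀ p ∈ H, g p = t) :
    #V + #H ≤ #{p ∈ A | f p = s ∨ g p = t} := by
  rw [← card_union_of_disjoint hVH]
  refine card_le_card fun p hp ↦ mem_filter.2 ?_
  rcases mem_union.1 hp with hp | hp
  · exact ⟨hV hp, .inl (hs p hp)⟩
  · exact ⟨hH hp, .inr (ht p hp)⟩

lemma exists_four_le_card_filter_or_of_sdiff_pairedBy_eq_singleton (hA : 4 ≤ #A)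
    (hcover : A ⊆ A.pairedBy f ∪ A.pairedBy g) {x : α} (hx : A \ A.pairedBy f = {x}) :
    ∃ s t, 4 ≤ #{p ∈ A | f p = s ∨ g p = t} := by
  obtain ⟨hxA, hxf⟩ := mem_sdiff.1 (hx ▸ mem_singleton_self x)
  have hxg : x ∈ A.pairedBy g := by simpa [hxf] using hcover hxA
  obtain ⟨-, y, hyA, hyx, hgy⟩ := mem_filter.1 hxg
  set B := (A.erase x).erase y
  have hBA : B ⊆ A := (erase_subset _ _).trans (erase_subset _ _)
  have hB : 1 < #B := by
    rw [card_erase_of_mem (mem_erase.2 ⟨hyx, hyA⟩), card_erase_of_mem hxA]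
    omega
  have hBf : ∀ w ∈ B, w ∈ A.pairedBy f := fun w hw ↦ by
    by_contra hwf
    exact ne_of_mem_erase (mem_of_mem_erase hw)
      (mem_singleton.1 (hx ▸ mem_sdiff.2 ⟨hBA hw, hwf⟩))
  -- If `f` were injective on `B`, every point of `B` would have its `f`-partner at `y`.
  have hnotinj : ¬ Set.InjOn f B := by
    intro hinj
    have hfy : ∀ w ∈ B, f w = f y := by
      intro w hw
      obtain ⟨-, q, hqA, hqw, hfq⟩ := mem_filter.1 (hBf w hw)
      have hqx : q ≠ x := by
        rintro rfl
        exact hxf (mem_filter.2 ⟨hxA, w, hBA hw, hqw.symm, hfq.symm⟩)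
      by_cases hqy : q = y
      · exact hqy ▸ hfq.symm
      · exact absurd (hinj (by simp [B, hqA, hqx, hqy]) hw hfq) hqw
    obtain ⟨w, hw, w', hw', hne⟩ := one_lt_card.1 hB
    exact hne (hinj hw hw' ((hfy w hw).trans (hfy w' hw').symm))
  obtain ⟨w, hw, w', hw', hfw, hne⟩ : ∃ w ∈ B, ∃ w' ∈ B, f w = f w' ∧ w ≠ w' := by
    simpa [Set.InjOn] using hnotinj
  obtain ⟨hwy, hwx, hwA⟩ : w ≠ y ∧ w ≠ x ∧ w ∈ A := by simpa [B] using hw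
  obtain ⟨hwy', hwx', hwA'⟩ : w' ≠ y ∧ w' ≠ x ∧ w' ∈ A := by simpa [B] using hw'
  refine ⟨f w, g x, ?_⟩
  calc 4 = #{w, w'} + #{x, y} := by rw [card_pair hne, card_pair hyx.symm]
    _ ≤ _ := card_add_card_le_card_filter_or (by simp [insert_subset_iff, hwA, hwA'])
      (by simp [insert_subset_iff, hxA, hyA])
      (by simp [hwx.symm, hwx'.symm, hwy.symm, hwy'.symm]) (by simp [hfw]) (by simp [hgy])

lemma exists_sdiff_pairedBy_eq_singleton (hA : #A = 5) (hf : ∀ b, #{p ∈ A | f p = b} ≤ 2)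
    (hg : ∀ c, #{p ∈ A | g p = c} ≤ 2) (hcover : A ⊆ A.pairedBy f ∪ A.pairedBy g) :
    ∃ x, A \ A.pairedBy f = {x} ∨ A \ A.pairedBy g = {x} := by
  have hdisj : Disjoint (A \ A.pairedBy f) (A \ A.pairedBy g) := by
    rw [disjoint_left]
    intro p hpf hpg
    simpa [(mem_sdiff.1 hpf).2, (mem_sdiff.1 hpg).2] using hcover (mem_sdiff.1 hpf).1
  have hsum : #(A \ A.pairedBy f) + #(A \ A.pairedBy g) ≤ #A := by
    rw [← card_union_of_disjoint hdisj]
    exact card_le_card (union_subset sdiff_subset sdiff_subset)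
  have hcf := card_sdiff_add_card_eq_card (pairedBy_subset (A := A) (f := f))
  have hcg := card_sdiff_add_card_eq_card (pairedBy_subset (A := A) (f := g))
  obtain ⟨k, hk⟩ := even_card_pairedBy hf
  obtain ⟨l, hl⟩ := even_card_pairedBy hg
  have hone : #(A \ A.pairedBy f) = 1 ∨ #(A \ A.pairedBy g) = 1 := by omega
  rcases hone with h | h <;> obtain ⟨x, hx⟩ := card_eq_one.1 h
  exacts [⟨x, .inl hx⟩, ⟨x, .inr hx⟩]

theorem exists_four_le_card_filter_or (hA : #A = 5) (hf : ∀ b, #{p ∈ A | f p = b} ≤ 2)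
    (hg : ∀ c, #{p ∈ A | g p = c} ≤ 2)
    (hpartner : ∀ p ∈ A, ∃ q ∈ A, q ≠ p ∧ (f q = f p ∨ g q = g p)) :
    ∃ s t, 4 ≤ #{p ∈ A | f p = s ∨ g p = t} := by
  have hcover : A ⊆ A.pairedBy f ∪ A.pairedBy g := fun p hp ↦ by
    obtain ⟨q, hqA, hqp, hq | hq⟩ := hpartner p hp
    exacts [mem_union_left _ (mem_filter.2 ⟨hp, q, hqA, hqp, hq⟩),
      mem_union_right _ (mem_filter.2 ⟨hp, q, hqA, hqp, hq⟩)]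
  obtain ⟨x, hx | hx⟩ := exists_sdiff_pairedBy_eq_singleton hA hf hg hcover
  · exact exists_four_le_card_filter_or_of_sdiff_pairedBy_eq_singleton (by omega) hcover hx
  · obtain ⟨t, s, h⟩ := exists_four_le_card_filter_or_of_sdiff_pairedBy_eq_singleton
      (by omega) (hcover.trans (union_comm _ _).subset) hx
    exact ⟨s, t, by simpa only [or_comm] using h⟩

end Finset

/-- Combinatorial configuration lemma: if `A` is a set of 5 points in `S × T` such that
every vertical line (fixed first coordinate) contains at most 2 points of `A`, every
horizontal line (fixed second coordinate) contains at most 2 points of `A`, and every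
point of `A` shares its first or second coordinate with another point of `A`, then some
vertical line and some horizontal line together contain at least 4 points of `A`. -/
theorem five_points_config {S T : Type*} (A : Set (S × T)) (hA : A.ncard = 5)
    (h1 : ∀ s : S, {p ∈ A | p.1 = s}.ncard ≤ 2)
    (h2 : ∀ t : T, {p ∈ A | p.2 = t}.ncard ≤ 2)
    (h3 : ∀ p ∈ A, ∃ q ∈ A, q ≠ p ∧ (q.1 = p.1 ∨ q.2 = p.2)) :
    ∃ (s : S) (t : T), 4 ≤ {p ∈ A | p.1 = s ∨ p.2 = t}.ncard := by
  classical
  lift A to Finset (S × T) using Set.finite_of_ncard_ne_zero (by omega)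
  simp only [Finset.mem_coe, ← Finset.coe_filter, Set.ncard_coe_finset] at hA h1 h2 h3 ⊢
  exact Finset.exists_four_le_card_filter_or hA h1 h2 h3
end
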